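/- Let X be a real normed space, α, β ∈ [0,1) with 0 < α+β < 1, and define the ρ_{α,β}-angle between nonzero u, v by θ_{α,β}(u,v) = arccos( ρ_{α,β}(u,v) / ((α+β)‖u‖‖v‖) ). Then for nonzero scalars a, b: θ_{α,β}(au, bv) = θ_{α,β}(u,v) if ab > 0, and θ_{α,β}(au, bv) = π − θ_{β,α}(u,v) if ab < 0. -/

import Mathlib

noncomputable def rhoP {X : Type*} [NormedAddCommGroup X] [NormedSpace ℝ X] (u v : X) : ℝ :=
  Filter.limUnder (nhdsWithin (0:ℝ) (Set.Ioi 0)) (fun t : ℝ => (‖u + t • v‖^2 - ‖u‖^2) / (2*t))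

noncomputable def rhoM {X : Type*} [NormedAddCommGroup X] [NormedSpace ℝ X] (u v : X) : ℝ :=
  Filter.limUnder (nhdsWithin (0:ℝ) (Set.Iio 0)) (fun t : ℝ => (‖u + t • v‖^2 - ‖u‖^2) / (2*t))

noncomputable def rhoAB {X : Type*} [NormedAddCommGroup X] [NormedSpace ℝ X]
    (α β : ℝ) (u v : X) : ℝ := α * rhoM u v + β * rhoP u v

/-- The ρ_{α,β}-angle between two vectors. -/
noncomputable def thetaAB {X : Type*} [NormedAddCommGroup X] [NormedSpace ℝ X]
    (α β : ℝ) (u v : X) : ℝ :=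
  Real.arccos (rhoAB α β u v / ((α + β) * ‖u‖ * ‖v‖))

/-!
The difference quotient `q_{u,v}(t) = (‖u + t v‖² - ‖u‖²) / (2t)` is half the slope at `0` of the
convex function `t ↦ ‖u + t v‖²`, hence monotone on `t ≠ 0`; so both one-sided limits `ρ₊`, `ρ₋`
exist. Since `‖a u + t b v‖² = a² ‖u + (b/a) t v‖²`, we get `q_{au,bv}(t) = ab · q_{u,v}((b/a) t)`,
and the substitution `t ↦ (b/a) t` preserves the side of `0` when `ab > 0` and swaps it when
`ab < 0`. Thus `ρ_{α,β}(au, bv) = ab ρ_{α,β}(u,v)` or `ab ρ_{β,α}(u,v)`, and the factor `ab`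
against `|a||b|` in the denominator leaves the cosine unchanged or flips its sign,
`arccos (-x) = π - arccos x`.
-/

open Filter Set Topology

lemma tendsto_const_mul_nhdsWithin_zero (c : ℝ) {s t : Set ℝ} (h : MapsTo (c * ·) s t) :
    Tendsto (c * ·) (𝓝[s] 0) (𝓝[t] 0) := by
  simpa using ((continuous_const_mul c).continuousWithinAt (x := 0)).tendsto_nhdsWithin h

section NormSqDiffQuot

variable {X : Type*} [NormedAddCommGroup X] [NormedSpace ℝ X]

noncomputable def normSqDiffQuot (u v : X) (t : ℝ) : ℝ :=
  (‖u + t • v‖ ^ 2 - ‖u‖ ^ 2) / (2 * t)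

lemma convexOn_norm_add_smul_sq (u v : X) :
    ConvexOn ℝ univ (fun t : ℝ => ‖u + t • v‖ ^ 2) := by
  have hnorm : ConvexOn ℝ univ (fun t : ℝ => ‖u + t • v‖) := by
    simpa [Function.comp_def, AffineMap.lineMap_apply, add_comm] using
      convexOn_univ_norm.comp_affineMap (AffineMap.lineMap u (u + v))
  exact hnorm.pow (fun _ _ => norm_nonneg _) 2

lemma normSqDiffQuot_eq_slope (u v : X) (t : ℝ) :
    normSqDiffQuot u v t = slope (fun t : ℝ => ‖u + t • v‖ ^ 2) 0 t / 2 := by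
  simp [normSqDiffQuot, slope_def_field, div_div, mul_comm]

lemma monotoneOn_normSqDiffQuot (u v : X) : MonotoneOn (normSqDiffQuot u v) {0}ᶜ := by
  intro s hs t ht hst
  rw [normSqDiffQuot_eq_slope, normSqDiffQuot_eq_slope]
  gcongr
  exact (convexOn_norm_add_smul_sq u v).slope_mono (mem_univ 0) ⟨trivial, hs⟩ ⟨trivial, ht⟩ hst

lemma tendsto_normSqDiffQuot_rhoP (u v : X) :
    Tendsto (normSqDiffQuot u v) (𝓝[>] 0) (𝓝 (rhoP u v)) := by
  have hmono := monotoneOn_normSqDiffQuot u v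
  have hbdd : BddBelow (normSqDiffQuot u v '' Ioi 0) := by
    refine ⟨normSqDiffQuot u v (-1), ?_⟩
    rintro _ ⟨t, ht : 0 < t, rfl⟩
    exact hmono (by norm_num) ht.ne' (by linarith)
  have h := (hmono.mono fun _ ht => (mem_Ioi.mp ht).ne').tendsto_nhdsGT hbdd
  rwa [← h.limUnder_eq] at h

lemma tendsto_normSqDiffQuot_rhoM (u v : X) :
    Tendsto (normSqDiffQuot u v) (𝓝[<] 0) (𝓝 (rhoM u v)) := by
  have hmono := monotoneOn_normSqDiffQuot u v
  have hbdd : BddAbove (normSqDiffQuot u v '' Iio 0) := by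
    refine ⟨normSqDiffQuot u v 1, ?_⟩
    rintro _ ⟨t, ht : t < 0, rfl⟩
    exact hmono ht.ne (by norm_num) (by linarith)
  have h := (hmono.mono fun _ ht => (mem_Iio.mp ht).ne).tendsto_nhdsLT hbdd
  rwa [← h.limUnder_eq] at h

lemma normSqDiffQuot_smul (u v : X) {a : ℝ} (ha : a ≠ 0) (b t : ℝ) :
    normSqDiffQuot (a • u) (b • v) t = a * b * normSqDiffQuot u v (b / a * t) := by
  have hscale : a • u + t • b • v = a • (u + (b / a * t) • v) := by
    rw [smul_add, smul_smul, smul_smul, show a * (b / a * t) = t * b by field_simp]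
  simp only [normSqDiffQuot, hscale, norm_smul, mul_pow, Real.norm_eq_abs, sq_abs]
  obtain rfl | hb := eq_or_ne b 0
  · simp
  obtain rfl | ht := eq_or_ne t 0
  · simp
  field_simp

lemma tendsto_normSqDiffQuot_smul (u v : X) {a : ℝ} (ha : a ≠ 0) (b : ℝ) {l₁ l₂ : Filter ℝ}
    {L : ℝ} (hL : Tendsto (normSqDiffQuot u v) l₂ (𝓝 L)) (hl : Tendsto (b / a * ·) l₁ l₂) :
    Tendsto (normSqDiffQuot (a • u) (b • v)) l₁ (𝓝 (a * b * L)) := by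
  refine ((hL.comp hl).const_mul (a * b)).congr fun t => ?_
  exact (normSqDiffQuot_smul u v ha b t).symm

lemma rhoAB_smul_of_mul_pos (α β : ℝ) (u v : X) {a b : ℝ} (hab : 0 < a * b) :
    rhoAB α β (a • u) (b • v) = a * b * rhoAB α β u v := by
  have ha : a ≠ 0 := left_ne_zero_of_mul hab.ne'
  have hc : 0 < b / a := div_pos_iff.2 ((mul_pos_iff.1 hab).imp And.symm And.symm)
  have hGT : Tendsto (b / a * ·) (𝓝[>] 0) (𝓝[>] 0) :=
    tendsto_const_mul_nhdsWithin_zero _ fun _ ht => mul_pos hc ht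
  have hLT : Tendsto (b / a * ·) (𝓝[<] 0) (𝓝[<] 0) :=
    tendsto_const_mul_nhdsWithin_zero _ fun _ ht => mul_neg_of_pos_of_neg hc ht
  have hP : rhoP (a • u) (b • v) = a * b * rhoP u v :=
    (tendsto_normSqDiffQuot_smul u v ha b (tendsto_normSqDiffQuot_rhoP u v) hGT).limUnder_eq
  have hM : rhoM (a • u) (b • v) = a * b * rhoM u v :=
    (tendsto_normSqDiffQuot_smul u v ha b (tendsto_normSqDiffQuot_rhoM u v) hLT).limUnder_eq
  rw [rhoAB, rhoAB, hP, hM]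
  ring

lemma rhoAB_smul_of_mul_neg (α β : ℝ) (u v : X) {a b : ℝ} (hab : a * b < 0) :
    rhoAB α β (a • u) (b • v) = a * b * rhoAB β α u v := by
  have ha : a ≠ 0 := left_ne_zero_of_mul hab.ne
  have hc : b / a < 0 := div_neg_iff.2 ((mul_neg_iff.1 hab).symm.imp And.symm And.symm)
  have hGT : Tendsto (b / a * ·) (𝓝[>] 0) (𝓝[<] 0) :=
    tendsto_const_mul_nhdsWithin_zero _ fun _ ht => mul_neg_of_neg_of_pos hc ht
  have hLT : Tendsto (b / a * ·) (𝓝[<] 0) (𝓝[>] 0) :=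
    tendsto_const_mul_nhdsWithin_zero _ fun _ ht => mul_pos_of_neg_of_neg hc ht
  have hP : rhoP (a • u) (b • v) = a * b * rhoM u v :=
    (tendsto_normSqDiffQuot_smul u v ha b (tendsto_normSqDiffQuot_rhoM u v) hGT).limUnder_eq
  have hM : rhoM (a • u) (b • v) = a * b * rhoP u v :=
    (tendsto_normSqDiffQuot_smul u v ha b (tendsto_normSqDiffQuot_rhoP u v) hLT).limUnder_eq
  rw [rhoAB, rhoAB, hP, hM]
  ring

end NormSqDiffQuot

theorem stmt_17_general {X : Type*} [NormedAddCommGroup X] [NormedSpace ℝ X]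
    (α β : ℝ)
    (u v : X) (a b : ℝ) :
    (a * b > 0 → thetaAB α β (a • u) (b • v) = thetaAB α β u v) ∧
    (a * b < 0 → thetaAB α β (a • u) (b • v) = Real.pi - thetaAB β α u v) := by
  have hnorm : (α + β) * ‖a • u‖ * ‖b • v‖ = |a * b| * ((α + β) * ‖u‖ * ‖v‖) := by
    rw [norm_smul, norm_smul, Real.norm_eq_abs, Real.norm_eq_abs, abs_mul]
    ring
  constructor
  · intro hab
    rw [thetaAB, thetaAB, rhoAB_smul_of_mul_pos α β u v hab, hnorm, abs_of_pos hab,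
      mul_div_mul_left _ _ hab.ne']
  · intro hab
    rw [thetaAB, thetaAB, rhoAB_smul_of_mul_neg α β u v hab, hnorm, abs_of_neg hab, neg_mul,
      ← mul_neg, mul_div_mul_left _ _ hab.ne, div_neg, Real.arccos_neg, add_comm β α]

theorem stmt_17 {X : Type*} [NormedAddCommGroup X] [NormedSpace ℝ X]
    (α β : ℝ) (hα : α ∈ Set.Ico (0:ℝ) 1) (hβ : β ∈ Set.Ico (0:ℝ) 1)
    (hab : 0 < α + β) (hab1 : α + β < 1)
    (u v : X) (hu : u ≠ 0) (hv : v ≠ 0) (a b : ℝ) (ha : a ≠ 0) (hb : b ≠ 0) :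
    (a * b > 0 → thetaAB α β (a • u) (b • v) = thetaAB α β u v) ∧
    (a * b < 0 → thetaAB α β (a • u) (b • v) = Real.pi - thetaAB β α u v) :=
  stmt_17_general α β u v a b
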